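/- arXiv:1904.08312 — 2 statements merged into one kernel-verified Lean document; each statement's English description precedes it below -/
import Mathlib

section
/- A harmonic function on a connected open set in ℝ^m cannot have isolated zeros unless it is identically zero: if u is harmonic on a domain D, u(x₀) = 0, and u is not identically zero, then every neighborhood of x₀ contains another zero of u. -/
open MeasureTheory Metric Real

noncomputable section

/-- The Laplacian of `u : ℝ^m → ℝ` as the sum of second partial derivatives. -/
def lap {m : ℕ} (u : EuclideanSpace ℝ (Fin m) → ℝ) (x : EuclideanSpace ℝ (Fin m)) : ℝ :=
  ∑ i : Fin m,
    fderiv ℝ (fun y => fderiv ℝ u y (EuclideanSpace.single i 1)) x (EuclideanSpace.single i 1)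

/-- `u` is harmonic on `s`: it is `C²` there and its Laplacian vanishes. -/
def IsHarmonicOn {m : ℕ} (u : EuclideanSpace ℝ (Fin m) → ℝ)
    (s : Set (EuclideanSpace ℝ (Fin m))) : Prop :=
  ContDiffOn ℝ 2 u s ∧ ∀ x ∈ s, lap u x = 0

/-- Average of `u` over the sphere `∂B_r(x)` w.r.t. the `(m-1)`-dimensional
Hausdorff (surface) measure. -/
def sphAvg {m : ℕ} (u : EuclideanSpace ℝ (Fin m) → ℝ) (x : EuclideanSpace ℝ (Fin m))
    (r : ℝ) : ℝ :=
  ((μH[(m : ℝ) - 1] (sphere x r)).toReal)⁻¹ * ∫ y in sphere x r, u y ∂(μH[(m : ℝ) - 1])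

/-- Average of `u` over the open ball `B_r(x)` w.r.t. Lebesgue measure. -/
def ballAvg {m : ℕ} (u : EuclideanSpace ℝ (Fin m) → ℝ) (x : EuclideanSpace ℝ (Fin m))
    (r : ℝ) : ℝ :=
  ((volume (ball x r)).toReal)⁻¹ * ∫ y in ball x r, u y

/-- The volume `ω_m` of the unit ball in `ℝ^m`. -/
def unitBallVol (m : ℕ) : ℝ := (volume (ball (0 : EuclideanSpace ℝ (Fin m)) 1)).toReal

/-!
Around a zero `x₀` of `u`, every small sphere `S` contains points where `u ≤ u x₀ = 0` and points
where `u ≥ 0`: otherwise, say `u > u x₀` on `S`, the perturbation `u - δ ‖x - x₀‖²` with small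
`δ > 0` would attain its minimum over the closed ball at an interior point, where its Laplacian
`-2 m δ` would have to be nonnegative. For `m ≥ 2` the sphere is connected, so the intermediate
value theorem yields a zero of `u` on `S`, and `S` can be taken inside any neighbourhood of `x₀`.
-/

open Filter InnerProductSpace Laplacian
open scoped Topology RealInnerProductSpace

theorem IsLocalMin.deriv_deriv_nonneg {f : ℝ → ℝ} {a : ℝ} (h : IsLocalMin f a)
    (hc : ContinuousAt f a) : 0 ≤ deriv (deriv f) a := by
  by_contra! hneg
  have hconst : f =ᶠ[𝓝 a] fun _ => f a := by
    filter_upwards [h, isLocalMax_of_deriv_deriv_neg hneg h.deriv_eq_zero hc] with x hmin hmax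
    exact le_antisymm hmax hmin
  exact hneg.ne (by rw [hconst.deriv.deriv_eq]; simp)

section

variable {E F : Type*} [NormedAddCommGroup E] [NormedSpace ℝ E] [NormedAddCommGroup F]
  [NormedSpace ℝ F]

theorem ContDiffAt.fderiv_fderiv_apply_eq_iteratedFDeriv {f : E → F} {x : E}
    (hf : ContDiffAt ℝ 2 f x) (v w : E) :
    fderiv ℝ (fun y => fderiv ℝ f y v) x w = iteratedFDeriv ℝ 2 f x ![w, v] := by
  have hdiff : DifferentiableAt ℝ (fderiv ℝ f) x :=
    (hf.fderiv_right (m := 1) le_rfl).differentiableAt one_ne_zero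
  rw [iteratedFDeriv_two_apply, fderiv_clm_apply hdiff (differentiableAt_const v)]
  simp

theorem IsLocalMin.iteratedFDeriv_two_nonneg {f : E → ℝ} {x : E} (h : IsLocalMin f x)
    (hf : ContDiffAt ℝ 2 f x) (v : E) : 0 ≤ iteratedFDeriv ℝ 2 f x ![v, v] := by
  set L : ℝ → E := fun t => x + t • v
  have hL : ∀ t, HasDerivAt L v t := fun t =>
    (((hasDerivAt_id t).smul_const v).const_add x).congr_deriv (one_smul ℝ v)
  have hL0 : L 0 = x := by simp [L]
  have hmin : IsLocalMin (f ∘ L) 0 :=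
    (hL0 ▸ h).comp_continuous (hL 0).continuousAt
  have hderiv : deriv (f ∘ L) =ᶠ[𝓝 0] fun t => fderiv ℝ f (L t) v := by
    have : ∀ᶠ t in 𝓝 (0 : ℝ), DifferentiableAt ℝ f (L t) :=
      (hL 0).continuousAt.eventually (hL0 ▸ (hf.eventually (by simp)).mono
        fun y hy => hy.differentiableAt two_ne_zero)
    filter_upwards [this] with t ht
    exact (ht.hasFDerivAt.comp_hasDerivAt t (hL t)).deriv
  have hsecond : deriv (deriv (f ∘ L)) 0 = iteratedFDeriv ℝ 2 f x ![v, v] := by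
    rw [hderiv.deriv_eq, ← hf.fderiv_fderiv_apply_eq_iteratedFDeriv]
    have hdiff : DifferentiableAt ℝ (fun y => fderiv ℝ f y v) (L 0) := hL0 ▸
      ((hf.fderiv_right (m := 1) le_rfl).differentiableAt one_ne_zero).clm_apply
        (differentiableAt_const v)
    exact (hdiff.hasFDerivAt.comp_hasDerivAt 0 (hL 0)).deriv.trans (by rw [hL0])
  exact hsecond ▸ hmin.deriv_deriv_nonneg (hf.continuousAt.comp_of_eq (hL 0).continuousAt hL0)

end

section

variable {E : Type*} [NormedAddCommGroup E] [InnerProductSpace ℝ E] [FiniteDimensional ℝ E]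

theorem IsLocalMin.laplacian_nonneg {f : E → ℝ} {x : E} (h : IsLocalMin f x)
    (hf : ContDiffAt ℝ 2 f x) : 0 ≤ Δ f x := by
  rw [laplacian_eq_iteratedFDeriv_stdOrthonormalBasis]
  exact Finset.sum_nonneg fun i _ => h.iteratedFDeriv_two_nonneg hf _

theorem laplacian_norm_sub_sq (c x : E) :
    Δ (fun y => ‖y - c‖ ^ 2) x = 2 * Module.finrank ℝ E := by
  have hsecond (v : E) : iteratedFDeriv ℝ 2 (fun y => ‖y - c‖ ^ 2) x ![v, v] = 2 * ‖v‖ ^ 2 := by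
    have hfirst : (fun y => fderiv ℝ (fun y => ‖y - c‖ ^ 2) y v) = fun y => 2 * ⟪y - c, v⟫ := by
      funext y
      rw [(hasFDerivAt_sub_const (x := y) c).norm_sq.fderiv]
      simp [inner_sub_left]
    have hline := ((hasFDerivAt_sub_const (x := x) c).inner ℝ (hasFDerivAt_const v x)).const_mul 2
    have hq : ContDiff ℝ 2 fun y : E => ‖y - c‖ ^ 2 :=
      (contDiff_norm_sq ℝ).comp (contDiff_id.sub contDiff_const)
    rw [← hq.contDiffAt.fderiv_fderiv_apply_eq_iteratedFDeriv, hfirst, hline.fderiv]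
    simp
  simp [laplacian_eq_iteratedFDeriv_stdOrthonormalBasis, hsecond, mul_comm]

variable {v : E → ℝ} {c : E} {r : ℝ}

theorem exists_mem_sphere_le_of_laplacian_neg (hr : 0 ≤ r)
    (hcont : ContinuousOn v (closedBall c r)) (hdiff : ∀ y ∈ ball c r, ContDiffAt ℝ 2 v y)
    (hneg : ∀ y ∈ ball c r, Δ v y < 0) : ∃ p ∈ sphere c r, v p ≤ v c := by
  obtain ⟨y, hy, hymin⟩ :=
    (isCompact_closedBall c r).exists_isMinOn ⟨c, mem_closedBall_self hr⟩ hcont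
  rcases (mem_closedBall.1 hy).lt_or_eq with hlt | heq
  · have hyball : y ∈ ball c r := mem_ball.2 hlt
    have hloc : IsLocalMin v y := hymin.isLocalMin
      (mem_of_superset (isOpen_ball.mem_nhds hyball) ball_subset_closedBall)
    exact absurd (hloc.laplacian_nonneg (hdiff y hyball)) (hneg y hyball).not_ge
  · exact ⟨y, mem_sphere.2 heq, hymin (mem_closedBall_self hr)⟩

theorem exists_mem_sphere_le_of_laplacian_eq_zero [Nontrivial E] (hr : 0 < r)
    (hcont : ContinuousOn v (closedBall c r)) (hdiff : ∀ y ∈ ball c r, ContDiffAt ℝ 2 v y)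
    (hharm : ∀ y ∈ ball c r, Δ v y = 0) : ∃ p ∈ sphere c r, v p ≤ v c := by
  obtain ⟨z, hz, hzmin⟩ := (isCompact_sphere c r).exists_isMinOn
    (NormedSpace.sphere_nonempty.2 hr.le) (hcont.mono sphere_subset_closedBall)
  refine ⟨z, hz, not_lt.1 fun hlt => ?_⟩
  -- `v - δ ‖· - c‖²` is strictly superharmonic and, for this `δ`, still exceeds `v c` on the sphere.
  set δ := (v z - v c) / (2 * r ^ 2)
  have hδ : 0 < δ := div_pos (sub_pos.2 hlt) (by positivity)
  set q : E → ℝ := fun y => ‖y - c‖ ^ 2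
  have hq : ContDiff ℝ 2 q := (contDiff_norm_sq ℝ).comp (contDiff_id.sub contDiff_const)
  have hδq : ContDiff ℝ 2 (δ • q) := hq.const_smul δ
  have hneg (y : E) (hy : y ∈ ball c r) : Δ (v - δ • q) y < 0 := by
    rw [(hdiff y hy).laplacian_sub hδq.contDiffAt, laplacian_smul δ hq.contDiffAt,
      hharm y hy, laplacian_norm_sub_sq]
    have := Module.finrank_pos (R := ℝ) (M := E)
    simp only [smul_eq_mul, zero_sub, neg_neg_iff_pos]
    positivity
  obtain ⟨p, hp, hwp⟩ := exists_mem_sphere_le_of_laplacian_neg hr.le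
    (hcont.sub hδq.continuous.continuousOn)
    (fun y hy => (hdiff y hy).sub hδq.contDiffAt) hneg
  have hqp : q p = r ^ 2 := by simp [q, mem_sphere_iff_norm.1 hp]
  have hvp : v z ≤ v p := hzmin hp
  have hδr : δ * r ^ 2 = (v z - v c) / 2 := by simp only [δ]; field_simp
  simp [hqp, q] at hwp
  linarith

theorem exists_mem_sphere_ge_of_laplacian_eq_zero [Nontrivial E] (hr : 0 < r)
    (hcont : ContinuousOn v (closedBall c r)) (hdiff : ∀ y ∈ ball c r, ContDiffAt ℝ 2 v y)
    (hharm : ∀ y ∈ ball c r, Δ v y = 0) : ∃ p ∈ sphere c r, v c ≤ v p := by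
  obtain ⟨p, hp, hle⟩ := exists_mem_sphere_le_of_laplacian_eq_zero (v := -v) hr hcont.neg
    (fun y hy => (hdiff y hy).neg) (fun y hy => by simp [laplacian_neg, hharm y hy])
  exact ⟨p, hp, neg_le_neg_iff.1 hle⟩

end

section

variable {m : ℕ} {u : EuclideanSpace ℝ (Fin m) → ℝ} {D : Set (EuclideanSpace ℝ (Fin m))}
  {x : EuclideanSpace ℝ (Fin m)}

theorem lap_eq_laplacian (hu : ContDiffAt ℝ 2 u x) : lap u x = Δ u x := by
  simp [lap, laplacian_eq_iteratedFDeriv_orthonormalBasis u (EuclideanSpace.basisFun (Fin m) ℝ),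
    hu.fderiv_fderiv_apply_eq_iteratedFDeriv]

theorem IsHarmonicOn.contDiffAt (hu : IsHarmonicOn u D) (hD : IsOpen D) (hx : x ∈ D) :
    ContDiffAt ℝ 2 u x :=
  hu.1.contDiffAt (hD.mem_nhds hx)

theorem IsHarmonicOn.laplacian_eq_zero (hu : IsHarmonicOn u D) (hD : IsOpen D) (hx : x ∈ D) :
    Δ u x = 0 :=
  lap_eq_laplacian (hu.contDiffAt hD hx) ▸ hu.2 x hx

end

theorem zeros_not_isolated_general {m : ℕ} (hm : 2 ≤ m) (D : Set (EuclideanSpace ℝ (Fin m)))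
    (hD : IsOpen D) (u : EuclideanSpace ℝ (Fin m) → ℝ)
    (hu : IsHarmonicOn u D) (x₀ : EuclideanSpace ℝ (Fin m)) (hx₀ : x₀ ∈ D)
    (hzero : u x₀ = 0) :
    ∀ ε > (0 : ℝ), ∃ y ∈ D, y ≠ x₀ ∧ dist y x₀ < ε ∧ u y = 0 := by
  intro ε hε
  obtain ⟨R, hR, hRD⟩ := Metric.isOpen_iff.1 hD x₀ hx₀
  set r := min R ε / 2
  have hr : 0 < r := by positivity
  have hball : closedBall x₀ r ⊆ D :=
    (closedBall_subset_ball (by grind [min_le_left])).trans hRD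
  have hrank : 1 < Module.rank ℝ (EuclideanSpace ℝ (Fin m)) := by
    rw [← Module.finrank_eq_rank, finrank_euclideanSpace_fin]
    exact_mod_cast hm
  have : Nontrivial (EuclideanSpace ℝ (Fin m)) :=
    rank_pos_iff_nontrivial.1 (zero_lt_one.trans hrank)
  have hcont : ContinuousOn u (closedBall x₀ r) := hu.1.continuousOn.mono hball
  have hdiff (y) (hy : y ∈ ball x₀ r) : ContDiffAt ℝ 2 u y :=
    hu.contDiffAt hD (hball (ball_subset_closedBall hy))
  have hharm (y) (hy : y ∈ ball x₀ r) : Δ u y = 0 :=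
    hu.laplacian_eq_zero hD (hball (ball_subset_closedBall hy))
  obtain ⟨p, hp, hup⟩ := exists_mem_sphere_le_of_laplacian_eq_zero hr hcont hdiff hharm
  obtain ⟨q, hq, huq⟩ := exists_mem_sphere_ge_of_laplacian_eq_zero hr hcont hdiff hharm
  obtain ⟨y, hy, huy⟩ := (isConnected_sphere hrank x₀ hr.le).isPreconnected.intermediate_value
    hp hq (hcont.mono sphere_subset_closedBall) ⟨hzero ▸ hup, hzero ▸ huq⟩
  refine ⟨y, hball (sphere_subset_closedBall hy), ne_of_mem_sphere hy hr.ne', ?_, huy⟩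
  rw [mem_sphere.1 hy]
  grind [min_le_right]

theorem zeros_not_isolated {m : ℕ} (hm : 2 ≤ m) (D : Set (EuclideanSpace ℝ (Fin m)))
    (hD : IsOpen D) (hDc : IsConnected D) (u : EuclideanSpace ℝ (Fin m) → ℝ)
    (hu : IsHarmonicOn u D) (x₀ : EuclideanSpace ℝ (Fin m)) (hx₀ : x₀ ∈ D)
    (hzero : u x₀ = 0) (hnz : ¬ ∀ x ∈ D, u x = 0) :
    ∀ ε > (0 : ℝ), ∃ y ∈ D, y ≠ x₀ ∧ dist y x₀ < ε ∧ u y = 0 :=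
  zeros_not_isolated_general hm D hD u hu x₀ hx₀ hzero
end
end

section
/- If a continuous function u on the closure of a bounded domain D has the restricted mean value property with respect to spheres, then the maximum of u over the closure of D is attained on the boundary ∂D. -/
open MeasureTheory Metric Real

noncomputable section

/-! The set of maximum points of `u` is compact, so if it missed `∂D` it would lie in `D` and
contain a point `x` extremal in some direction. By the mean value property `u` would equal its
maximum on a whole sphere around `x`, since the surface measure charges every open piece of the
sphere; but that sphere leaves the set of maximum points. -/

open Set
open scoped ENNReal Pointwise RealInnerProductSpace

section InnerProductSpace

variable {E : Type*} [NormedAddCommGroup E] [InnerProductSpace ℝ E]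

theorem exists_isometryEquiv_apply_eq_self_apply_eq [CompleteSpace E] {x y y' : E}
    (h : dist y x = dist y' x) : ∃ e : E ≃ᵢ E, e x = x ∧ e y = y' := by
  rw [dist_eq_norm, dist_eq_norm] at h
  refine ⟨(IsometryEquiv.subRight x).trans
    ((ℝ ∙ ((y - x) - (y' - x)))ᗮ.reflection.toIsometryEquiv.trans (IsometryEquiv.addRight x)),
    by simp, ?_⟩
  change (ℝ ∙ ((y - x) - (y' - x)))ᗮ.reflection (y - x) + x = y'
  rw [Submodule.reflection_sub h, sub_add_cancel]

theorem IsCompact.exists_mem_forall_sphere_not_subset [Nontrivial E] {S : Set E}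
    (hS : IsCompact S) (hne : S.Nonempty) : ∃ x ∈ S, ∀ r, 0 < r → ¬ sphere x r ⊆ S := by
  obtain ⟨v, hv⟩ := exists_ne (0 : E)
  have hv' : 0 < ‖v‖ := norm_pos_iff.2 hv
  obtain ⟨x, hx, hmax⟩ :=
    hS.exists_isMaxOn hne (continuous_id.inner continuous_const : Continuous (⟪·, v⟫)).continuousOn
  refine ⟨x, hx, fun r hr hsub => ?_⟩
  have hy : x + (r / ‖v‖) • v ∈ sphere x r := by
    rw [mem_sphere_iff_norm, add_sub_cancel_left, norm_smul, Real.norm_of_nonneg (by positivity),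
      div_mul_cancel₀ _ hv'.ne']
  have hle : ⟪x + (r / ‖v‖) • v, v⟫ ≤ ⟪x, v⟫ := hmax (hsub hy)
  rw [inner_add_left, real_inner_smul_left, real_inner_self_eq_norm_sq] at hle
  nlinarith [mul_pos (div_pos hr hv') (pow_pos hv' 2)]

variable [MeasurableSpace E] [BorelSpace E] {d : ℝ}

theorem hausdorffMeasure_sphere [Nontrivial E] (hd : 0 ≤ d) (x : E) {r : ℝ} (hr : 0 < r) :
    μH[d] (sphere x r) = ‖r‖₊ ^ d • μH[d] (sphere (0 : E) 1) := by
  have : sphere x r = x +ᵥ r • sphere (0 : E) 1 := by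
    rw [smul_sphere r (0 : E) zero_le_one, vadd_sphere]; simp [abs_of_pos hr]
  rw [this, hausdorffMeasure_vadd _ (Or.inl hd), Measure.hausdorffMeasure_smul₀ hd hr.ne']

theorem toReal_hausdorffMeasure_sphere [Nontrivial E] (hd : 0 ≤ d) (x : E) {r : ℝ}
    (hr : 0 < r) :
    (μH[d] (sphere x r)).toReal = r ^ d * (μH[d] (sphere (0 : E) 1)).toReal := by
  rw [hausdorffMeasure_sphere hd x hr, ENNReal.toReal_smul, NNReal.smul_def, smul_eq_mul,
    NNReal.coe_rpow, coe_nnnorm, Real.norm_of_nonneg hr.le]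

/-- All caps of a given radius are congruent, and finitely many of them cover the sphere. -/
theorem hausdorffMeasure_sphere_inter_ball_pos [FiniteDimensional ℝ E] {x y : E} {r ε : ℝ}
    (hS : μH[d] (sphere x r) ≠ 0) (hy : y ∈ sphere x r) (hε : 0 < ε) :
    0 < μH[d] (sphere x r ∩ ball y ε) := by
  have hcap : ∀ y' ∈ sphere x r,
      μH[d] (sphere x r ∩ ball y' ε) = μH[d] (sphere x r ∩ ball y ε) := by
    intro y' hy'
    obtain ⟨e, hex, hey⟩ :=
      exists_isometryEquiv_apply_eq_self_apply_eq ((mem_sphere.1 hy).trans (mem_sphere.1 hy').symm)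
    have := e.hausdorffMeasure_image d (sphere x r ∩ ball y ε)
    rwa [image_inter e.injective, e.image_sphere, e.image_ball, hex, hey] at this
  obtain ⟨t, ht, htfin, hcover⟩ := finite_cover_balls_of_compact (isCompact_sphere x r) hε
  have hsub : sphere x r ⊆ ⋃ y' ∈ t, sphere x r ∩ ball y' ε :=
    (subset_inter subset_rfl hcover).trans (inter_iUnion₂ _ _).subset
  refine pos_iff_ne_zero.2 fun h0 => hS (measure_mono_null hsub ?_)
  exact (measure_biUnion_null_iff htfin.countable).2 fun y' hy' => (hcap y' (ht hy')).trans h0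

end InnerProductSpace

theorem eqOn_of_setAverage_eq_of_le {X : Type*} [MetricSpace X] [MeasurableSpace X]
    [OpensMeasurableSpace X] {μ : Measure X} {s : Set X} {f : X → ℝ} {M : ℝ}
    (hs : IsCompact s) (hμ : μ s ≠ ∞) (hpos : ∀ y ∈ s, ∀ ε > 0, 0 < μ (s ∩ ball y ε))
    (hf : ContinuousOn f s) (hle : ∀ z ∈ s, f z ≤ M) (havg : ⨍ z in s, f z ∂μ = M) :
    ∀ y ∈ s, f y = M := by
  intro y hy
  by_contra hne
  have hlt : f y < M := (hle y hy).lt_of_ne hne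
  have hsm : MeasurableSet s := hs.isClosed.measurableSet
  have hμ0 : μ.real s ≠ 0 := ENNReal.toReal_ne_zero.2
    ⟨fun h0 => (hpos y hy 1 one_pos).ne' (measure_mono_null inter_subset_left h0), hμ⟩
  obtain ⟨C, hC⟩ := hs.exists_bound_of_continuousOn hf
  have hfi : IntegrableOn f s μ := .of_bound hμ.lt_top
    (hf.aestronglyMeasurable_of_isCompact hs hsm) C (ae_restrict_of_forall_mem hsm hC)
  have hMi : IntegrableOn (fun _ => M) s μ := integrableOn_const hμ
  have hgi : IntegrableOn (fun z => M - f z) s μ := hMi.sub hfi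
  have hint : ∫ z in s, (M - f z) ∂μ = 0 := by
    rw [setAverage_eq, smul_eq_mul, inv_mul_eq_iff_eq_mul₀ hμ0] at havg
    rw [integral_sub hMi hfi, setIntegral_const, havg, smul_eq_mul, sub_self]
  obtain ⟨ε, hε, hball⟩ := Metric.mem_nhdsWithin_iff.1 (hf y hy (gt_mem_nhds hlt))
  have hsupp : s ∩ ball y ε ⊆ Function.support (fun z => M - f z) ∩ s := fun z hz =>
    ⟨sub_ne_zero.2 (hball ⟨hz.2, hz.1⟩).ne', hz.1⟩
  have := (setIntegral_pos_iff_support_of_nonneg_ae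
    (ae_restrict_of_forall_mem hsm fun z hz => sub_nonneg.2 (hle z hz)) hgi).2
    ((hpos y hy ε hε).trans_le (measure_mono hsupp))
  exact this.ne' hint

section Sphere

variable {m : ℕ} [NeZero m] {u : EuclideanSpace ℝ (Fin m) → ℝ} {x : EuclideanSpace ℝ (Fin m)}
  {r : ℝ}

theorem sphAvg_eq_zero
    (hdeg : (μH[(m : ℝ) - 1] (sphere (0 : EuclideanSpace ℝ (Fin m)) 1)).toReal = 0) (hr : 0 < r) :
    sphAvg u x r = 0 := by
  rw [sphAvg, toReal_hausdorffMeasure_sphere (sub_nonneg.2 (Nat.one_le_cast.2 NeZero.one_le)) x hr,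
    hdeg, mul_zero, inv_zero, zero_mul]

theorem eqOn_sphere_of_sphAvg_eq
    (hdeg : (μH[(m : ℝ) - 1] (sphere (0 : EuclideanSpace ℝ (Fin m)) 1)).toReal ≠ 0) (hr : 0 < r)
    {M : ℝ} (hu : ContinuousOn u (sphere x r)) (hle : ∀ z ∈ sphere x r, u z ≤ M)
    (havg : sphAvg u x r = M) : ∀ y ∈ sphere x r, u y = M := by
  have hS : (μH[(m : ℝ) - 1] (sphere x r)).toReal ≠ 0 := by
    rw [toReal_hausdorffMeasure_sphere (sub_nonneg.2 (Nat.one_le_cast.2 NeZero.one_le)) x hr]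
    exact mul_ne_zero (Real.rpow_pos_of_pos hr _).ne' hdeg
  obtain ⟨hS0, hStop⟩ := ENNReal.toReal_ne_zero.1 hS
  refine eqOn_of_setAverage_eq_of_le (isCompact_sphere x r) hStop
    (fun y hy ε hε => hausdorffMeasure_sphere_inter_ball_pos hS0 hy hε) hu hle ?_
  rwa [setAverage_eq, smul_eq_mul]

end Sphere

theorem restricted_mvp_max_on_boundary_general {m : ℕ} (hm : 2 ≤ m)
    (D : Set (EuclideanSpace ℝ (Fin m))) (hD : IsOpen D)
    (hDb : Bornology.IsBounded D) (hne : D.Nonempty)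
    (u : EuclideanSpace ℝ (Fin m) → ℝ) (hcont : ContinuousOn u (closure D))
    (hmv : ∀ x ∈ D, ∃ r : ℝ, 0 < r ∧ sphere x r ⊆ D ∧ u x = sphAvg u x r) :
    ∃ z ∈ frontier D, ∀ x ∈ closure D, u x ≤ u z := by
  have : NeZero m := ⟨by omega⟩
  have hK : IsCompact (closure D) := hDb.isCompact_closure
  obtain ⟨x₀, hx₀, hmax⟩ := hK.exists_isMaxOn hne.closure hcont
  by_contra! hcon
  set S := {z ∈ closure D | u z = u x₀}
  have hSD : S ⊆ D := fun z hz => by_contra fun hzD => by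
    obtain ⟨w, hw, hlt⟩ := hcon z ⟨hz.1, by rwa [hD.interior_eq]⟩
    exact (hmax hw).not_gt (hz.2 ▸ hlt)
  have hS : IsCompact S :=
    hK.of_isClosed_subset (hcont.preimage_isClosed_of_isClosed isClosed_closure isClosed_singleton)
      (sep_subset _ _)
  obtain ⟨x, hxS, hx⟩ := hS.exists_mem_forall_sphere_not_subset ⟨x₀, hx₀, rfl⟩
  obtain ⟨r, hr, hsub, havg⟩ := hmv x (hSD hxS)
  refine hx r hr fun y hy => ⟨subset_closure (hsub hy), ?_⟩
  -- If the unit sphere had surface measure `0` or `∞`, every `sphAvg` would be the junk value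
  -- `0`; treating that (impossible) case is cheaper than ruling it out.
  by_cases hdeg : (μH[(m : ℝ) - 1] (sphere (0 : EuclideanSpace ℝ (Fin m)) 1)).toReal = 0
  · have hu0 : EqOn u 0 (closure D) :=
      EqOn.of_subset_closure (fun z hz => by
        obtain ⟨ρ, hρ, -, hzρ⟩ := hmv z hz
        rw [hzρ, sphAvg_eq_zero hdeg hρ, Pi.zero_apply]) hcont continuousOn_const
        subset_closure subset_rfl
    exact (hu0 (subset_closure (hsub hy))).trans (hu0 hx₀).symm
  · exact eqOn_sphere_of_sphAvg_eq hdeg hr (hcont.mono (hsub.trans subset_closure))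
      (fun z hz => hmax (subset_closure (hsub hz))) (hxS.2 ▸ havg.symm) y hy

theorem restricted_mvp_max_on_boundary {m : ℕ} (hm : 2 ≤ m)
    (D : Set (EuclideanSpace ℝ (Fin m))) (hD : IsOpen D) (hDc : IsConnected D)
    (hDb : Bornology.IsBounded D) (hne : D.Nonempty)
    (u : EuclideanSpace ℝ (Fin m) → ℝ) (hcont : ContinuousOn u (closure D))
    (hmv : ∀ x ∈ D, ∃ r : ℝ, 0 < r ∧ sphere x r ⊆ D ∧ u x = sphAvg u x r) :
    ∃ z ∈ frontier D, ∀ x ∈ closure D, u x ≤ u z :=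
  restricted_mvp_max_on_boundary_general hm D hD hDb hne u hcont hmv
end
end
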